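/- The FCLP does not imply the CBLP: there exists a finite bounded lattice H (an eight-element non-modular lattice, obtained from the five-element modular non-distributive lattice ('diamond') by adjoining a new top element above a two-element chain over its top, together with an extra atom of the new top) which has the FCLP but does not have the CBLP. In particular, there exists a congruence-distributive algebra with FCLP and without CBLP. -/

import Mathlib

/-! Universal-algebra framework: algebras over a signature, congruences,
factor congruences, lifting properties. -/

structure Signature where
  ops : Type
  arity : ops → ℕ

structure Alg (σ : Signature) where
  carrier : Type
  interp : ∀ f : σ.ops, (Fin (σ.arity f) → carrier) → carrier

namespace Alg

variable {σ : Signature}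

/-- A congruence: an equivalence relation compatible with all operations. -/
def IsCon (A : Alg σ) (r : A.carrier → A.carrier → Prop) : Prop :=
  Equivalence r ∧
    ∀ (f : σ.ops) (x y : Fin (σ.arity f) → A.carrier),
      (∀ i, r (x i) (y i)) → r (A.interp f x) (A.interp f y)

/-- The least congruence `Δ_A`. -/
def delta (A : Alg σ) : A.carrier → A.carrier → Prop := fun a b => a = b

/-- The greatest congruence `∇_A = A²`. -/
def nabla (A : Alg σ) : A.carrier → A.carrier → Prop := fun _ _ => True

/-- Meet (intersection) of congruences. -/
def conMeet (A : Alg σ) (r s : A.carrier → A.carrier → Prop) :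
    A.carrier → A.carrier → Prop := fun a b => r a b ∧ s a b

/-- Join of congruences: the least congruence containing both. -/
def conJoin (A : Alg σ) (r s : A.carrier → A.carrier → Prop) :
    A.carrier → A.carrier → Prop := fun a b =>
  ∀ t, A.IsCon t → (∀ x y, r x y → t x y) → (∀ x y, s x y → t x y) → t a b

/-- The congruence generated by a set of pairs. -/
def conGen (A : Alg σ) (X : Set (A.carrier × A.carrier)) :
    A.carrier → A.carrier → Prop := fun a b =>
  ∀ t, A.IsCon t → (∀ p ∈ X, t p.1 p.2) → t a b

/-- Composition of relations: `(a,b) ∈ comp r s` iff `(a,x) ∈ s` and `(x,b) ∈ r`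
for some `x`. -/
def comp (A : Alg σ) (r s : A.carrier → A.carrier → Prop) :
    A.carrier → A.carrier → Prop := fun a b => ∃ x, s a x ∧ r x b

/-- Factor congruences: congruences `φ` having a congruence `φ*` with
`φ ∨ φ* = ∇`, `φ ∩ φ* = Δ` and `φ ∘ φ* = φ* ∘ φ`. -/
def IsFC (A : Alg σ) (φ : A.carrier → A.carrier → Prop) : Prop :=
  A.IsCon φ ∧ ∃ ψ, A.IsCon ψ ∧ A.conJoin φ ψ = A.nabla ∧
    A.conMeet φ ψ = A.delta ∧ A.comp φ ψ = A.comp ψ φ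

/-- Boolean congruences: complemented elements of the lattice `Con(A)`. -/
def IsBooleanCon (A : Alg σ) (φ : A.carrier → A.carrier → Prop) : Prop :=
  A.IsCon φ ∧ ∃ ψ, A.IsCon ψ ∧ A.conJoin φ ψ = A.nabla ∧ A.conMeet φ ψ = A.delta

/-- `A` is congruence-distributive iff the lattice `Con(A)` is distributive. -/
def CongDistrib (A : Alg σ) : Prop :=
  ∀ r s t, A.IsCon r → A.IsCon s → A.IsCon t →
    A.conMeet r (A.conJoin s t) = A.conJoin (A.conMeet r s) (A.conMeet r t)

/-- `A` is congruence-permutable iff all congruences permute under composition. -/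
def CongPermutable (A : Alg σ) : Prop :=
  ∀ r s, A.IsCon r → A.IsCon s → A.comp r s = A.comp s r

/-- Arithmetical = congruence-distributive + congruence-permutable. -/
def Arithmetical (A : Alg σ) : Prop := A.CongDistrib ∧ A.CongPermutable

/-- The quotient algebra `A/θ`. -/
noncomputable def quotAlg (A : Alg σ) (θ : A.carrier → A.carrier → Prop) :
    Alg σ where
  carrier := Quot θ
  interp f x := Quot.mk θ (A.interp f fun i => (x i).out)

/-- The image `α/θ = {(a/θ, b/θ) : (a,b) ∈ α}` of a relation in the quotient. -/
def quotRel (A : Alg σ) (θ α : A.carrier → A.carrier → Prop) :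
    Quot θ → Quot θ → Prop := fun x y =>
  ∃ a b, x = Quot.mk θ a ∧ y = Quot.mk θ b ∧ α a b

/-- `θ` has the Factor Congruence Lifting Property: the Boolean morphism
`FC(θ) : FC(A) → FC(A/θ)`, `ψ ↦ (ψ ∨ θ)/θ`, is surjective. -/
def HasFCLP (A : Alg σ) (θ : A.carrier → A.carrier → Prop) : Prop :=
  ∀ γ, (A.quotAlg θ).IsFC γ →
    ∃ ψ, A.IsFC ψ ∧ A.quotRel θ (A.conJoin ψ θ) = γ

/-- `θ` has the Congruence Boolean Lifting Property: the Boolean morphism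
`B(Con(A)) → B(Con(A/θ))`, `ψ ↦ (ψ ∨ θ)/θ`, is surjective. -/
def HasCBLP (A : Alg σ) (θ : A.carrier → A.carrier → Prop) : Prop :=
  ∀ γ, (A.quotAlg θ).IsBooleanCon γ →
    ∃ ψ, A.IsBooleanCon ψ ∧ A.quotRel θ (A.conJoin ψ θ) = γ

/-- `A` has FCLP iff every congruence of `A` has FCLP. -/
def AlgFCLP (A : Alg σ) : Prop := ∀ θ, A.IsCon θ → A.HasFCLP θ

/-- `A` has CBLP iff every congruence of `A` has CBLP. -/
def AlgCBLP (A : Alg σ) : Prop := ∀ θ, A.IsCon θ → A.HasCBLP θ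

/-- FC-normality. -/
def FCNormal (A : Alg σ) : Prop :=
  ∀ φ ψ, A.IsCon φ → A.IsCon ψ → A.comp φ ψ = A.nabla →
    ∃ α β, A.IsFC α ∧ A.IsFC β ∧ A.conMeet α β = A.delta ∧
      A.comp φ α = A.nabla ∧ A.comp ψ β = A.nabla

/-- B-normality. -/
def BNormal (A : Alg σ) : Prop :=
  ∀ φ ψ, A.IsCon φ → A.IsCon ψ → A.conJoin φ ψ = A.nabla →
    ∃ α β, A.IsBooleanCon α ∧ A.IsBooleanCon β ∧ A.conMeet α β = A.delta ∧
      A.conJoin φ α = A.nabla ∧ A.conJoin ψ β = A.nabla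

/-- Isomorphism of algebras. -/
def Iso (A B : Alg σ) : Prop :=
  ∃ e : A.carrier ≃ B.carrier,
    ∀ (f : σ.ops) (x : Fin (σ.arity f) → A.carrier),
      e (A.interp f x) = B.interp f fun i => e (x i)

/-- Direct product of a finite family of algebras. -/
def prodAlg {n : ℕ} (B : Fin n → Alg σ) : Alg σ where
  carrier := ∀ i, (B i).carrier
  interp f x := fun i => (B i).interp f fun j => x j i

/-- The product congruence `θ₁ × … × θₙ`. -/
def prodRel {n : ℕ} (B : Fin n → Alg σ)
    (θ : ∀ i, (B i).carrier → (B i).carrier → Prop) :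
    (prodAlg B).carrier → (prodAlg B).carrier → Prop :=
  fun x y => ∀ i, θ i (x i) (y i)

/-- Maximal congruences: maximal elements of `(Con(A) \ {∇}, ⊆)`. -/
def IsMaxCon (A : Alg σ) (θ : A.carrier → A.carrier → Prop) : Prop :=
  A.IsCon θ ∧ θ ≠ A.nabla ∧
    ∀ ψ, A.IsCon ψ → ψ ≠ A.nabla → (∀ a b, θ a b → ψ a b) → ψ = θ

/-- Prime congruences. -/
def IsPrimeCon (A : Alg σ) (θ : A.carrier → A.carrier → Prop) : Prop :=
  A.IsCon θ ∧ ∀ α β, A.IsCon α → A.IsCon β →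
    (∀ a b, α a b → β a b → θ a b) →
    (∀ a b, α a b → θ a b) ∨ ∀ a b, β a b → θ a b

end Alg

/-! The signature of bounded lattices, the Boolean center, and the BLP. -/

inductive LatOp | sup | inf | bot | top

abbrev latSig : Signature where
  ops := LatOp
  arity := fun f => match f with
    | .sup => 2 | .inf => 2 | .bot => 0 | .top => 0

/-- The algebra over `latSig` attached to a bounded lattice. -/
def latAlg (L : Type) [Lattice L] [BoundedOrder L] : Alg latSig where
  carrier := L
  interp := fun f => match f with
    | .sup => fun x => x 0 ⊔ x 1
    | .inf => fun x => x 0 ⊓ x 1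
    | .bot => fun _ => ⊥
    | .top => fun _ => ⊤

/-- A complemented element of an algebra over the bounded-lattice signature
(an element of the Boolean center). -/
def ComplementedElem (A : Alg latSig) (x : A.carrier) : Prop :=
  ∃ y, A.interp .inf ![x, y] = A.interp .bot ![] ∧
       A.interp .sup ![x, y] = A.interp .top ![]

/-- A congruence `θ` of a bounded lattice `L` has the Boolean Lifting Property
iff the Boolean morphism `B(L) → B(L/θ)`, `a ↦ a/θ`, is surjective. -/
def HasBLP (L : Type) [Lattice L] [BoundedOrder L] (θ : L → L → Prop) : Prop :=
  ∀ q : ((latAlg L).quotAlg θ).carrier,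
    ComplementedElem ((latAlg L).quotAlg θ) q →
    ∃ a : L, ComplementedElem (latAlg L) a ∧ Quot.mk θ a = q


/-!
Every congruence of `H` other than `Δ` collapses `y` and `z`, so `B(Con H) = {Δ, ∇}`, and the
only Boolean congruences of a quotient that lift are its `Δ` and `∇`. Modulo `θ₁ = Cg(y, z)`,
however, `θ₂ = Cg(z, ⊤)` and `θ₃ = Cg(⊥, y)` become complements, so CBLP fails at `θ₁`. On the
other hand every congruence of `H` other than `∇` lies below `θ₂` or `θ₃`, and no two of
these compose to `∇`; so no two proper congruences of `H` compose to `∇`, every quotient of `H`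
has only the trivial factor congruences, and FCLP holds.
-/

namespace Alg

variable {σ : Signature} {A : Alg σ} {r s t θ : A.carrier → A.carrier → Prop}

theorem isCon_delta (A : Alg σ) : A.IsCon A.delta :=
  ⟨⟨fun _ => rfl, Eq.symm, Eq.trans⟩, fun _ _ _ h => congrArg _ (funext h)⟩

theorem isCon_nabla (A : Alg σ) : A.IsCon A.nabla :=
  ⟨⟨fun _ => trivial, fun _ => trivial, fun _ _ => trivial⟩, fun _ _ _ _ => trivial⟩

theorem IsCon.conMeet (hr : A.IsCon r) (hs : A.IsCon s) : A.IsCon (A.conMeet r s) :=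
  ⟨⟨fun a => ⟨hr.1.refl a, hs.1.refl a⟩, fun h => ⟨hr.1.symm h.1, hs.1.symm h.2⟩,
    fun h h' => ⟨hr.1.trans h.1 h'.1, hs.1.trans h.2 h'.2⟩⟩,
    fun f x y h => ⟨hr.2 f x y fun i => (h i).1, hs.2 f x y fun i => (h i).2⟩⟩

theorem isCon_conJoin (A : Alg σ) (r s : A.carrier → A.carrier → Prop) :
    A.IsCon (A.conJoin r s) :=
  ⟨⟨fun a _ ht _ _ => ht.1.refl a, fun h t ht hr hs => ht.1.symm (h t ht hr hs),
    fun h h' t ht hr hs => ht.1.trans (h t ht hr hs) (h' t ht hr hs)⟩,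
    fun f x y h t ht hr hs => ht.2 f x y fun i => h i t ht hr hs⟩

theorem le_conJoin_left : r ≤ A.conJoin r s := fun a b h _ _ hr _ => hr a b h

theorem le_conJoin_right : s ≤ A.conJoin r s := fun a b h _ _ _ hs => hs a b h

theorem conJoin_le (ht : A.IsCon t) (hr : r ≤ t) (hs : s ≤ t) : A.conJoin r s ≤ t :=
  fun _ _ h => h t ht hr hs

theorem conJoin_comm : A.conJoin r s = A.conJoin s r :=
  funext₂ fun _ _ => propext ⟨fun h t ht hs hr => h t ht hr hs, fun h t ht hr hs => h t ht hs hr⟩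

theorem conJoin_delta_left (hθ : A.IsCon θ) : A.conJoin A.delta θ = θ :=
  le_antisymm (conJoin_le hθ (fun a _ h => h ▸ hθ.1.refl a) le_rfl) le_conJoin_right

theorem conJoin_nabla_left : A.conJoin A.nabla θ = A.nabla :=
  le_antisymm (fun _ _ _ => trivial) le_conJoin_left

theorem transGen_le_conJoin :
    Relation.TransGen (fun a b => r a b ∨ s a b) ≤ A.conJoin r s := by
  intro a b h t ht hr hs
  induction h with
  | single h => exact h.elim (hr _ _) (hs _ _)
  | tail _ h ih => exact ht.1.trans ih (h.elim (hr _ _) (hs _ _))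

theorem IsCon.comp (hr : A.IsCon r) (hs : A.IsCon s) (hrs : A.comp r s = A.comp s r) :
    A.IsCon (A.comp r s) := by
  refine ⟨⟨fun a => ⟨a, hs.1.refl a, hr.1.refl a⟩, fun {a b} ⟨w, hs', hr'⟩ => ?_,
    fun {a b c} ⟨w, haw, hwb⟩ hbc => ?_⟩, fun f x y h => ?_⟩
  · rw [hrs]; exact ⟨w, hr.1.symm hr', hs.1.symm hs'⟩
  · obtain ⟨w₁, hbw₁, hw₁c⟩ := hbc
    obtain ⟨w', hww', hw'w₁⟩ : A.comp r s w w₁ := by rw [hrs]; exact ⟨b, hwb, hbw₁⟩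
    exact ⟨w', hs.1.trans haw hww', hr.1.trans hw'w₁ hw₁c⟩
  · choose w hxw hwy using h
    exact ⟨A.interp f w, hs.2 f x w hxw, hr.2 f w y hwy⟩

theorem conJoin_le_comp (hr : A.IsCon r) (hs : A.IsCon s) (hrs : A.comp r s = A.comp s r) :
    A.conJoin r s ≤ A.comp r s :=
  conJoin_le (hr.comp hs hrs) (fun a _ h => ⟨a, hs.1.refl a, h⟩) (fun _ b h => ⟨b, h, hr.1.refl b⟩)

theorem isFC_delta (A : Alg σ) : A.IsFC A.delta :=
  ⟨isCon_delta A, A.nabla, isCon_nabla A, by rw [conJoin_comm, conJoin_nabla_left],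
    funext₂ fun _ _ => and_true _,
    funext₂ fun a b => propext ⟨fun _ => ⟨a, rfl, trivial⟩, fun _ => ⟨b, trivial, rfl⟩⟩⟩

theorem isFC_nabla (A : Alg σ) : A.IsFC A.nabla :=
  ⟨isCon_nabla A, A.delta, isCon_delta A, conJoin_nabla_left,
    funext₂ fun _ _ => true_and _,
    funext₂ fun a b => propext ⟨fun _ => ⟨b, trivial, rfl⟩, fun _ => ⟨a, rfl, trivial⟩⟩⟩

theorem exists_rel_ne_of_ne_delta (hr : A.IsCon r) (h : r ≠ A.delta) : ∃ a b, r a b ∧ a ≠ b := by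
  by_contra! h'
  exact h (funext₂ fun a b => propext ⟨h' a b, fun hab => hab ▸ hr.1.refl a⟩)

theorem eq_delta_or_eq_nabla_of_isBooleanCon {m₁ m₂ : A.carrier} (hm : m₁ ≠ m₂)
    (hmono : ∀ r, A.IsCon r → r ≠ A.delta → r m₁ m₂) (hr : A.IsBooleanCon r) :
    r = A.delta ∨ r = A.nabla := by
  obtain ⟨hr, r', hr', hjoin, hmeet⟩ := hr
  by_cases h : r = A.delta
  · exact Or.inl h
  by_cases h' : r' = A.delta
  · rw [h', conJoin_comm, conJoin_delta_left hr] at hjoin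
    exact Or.inr hjoin
  · exact absurd ((congrFun₂ hmeet m₁ m₂).mp ⟨hmono r hr h, hmono r' hr' h'⟩) hm

section Quotient

variable {γ γ' : Quot θ → Quot θ → Prop}

theorem mk_eq_mk_iff (hθ : A.IsCon θ) {a b : A.carrier} :
    Quot.mk θ a = Quot.mk θ b ↔ θ a b :=
  hθ.1.quot_mk_eq_iff a b

theorem quotAlg_interp_mk (hθ : A.IsCon θ) (f : σ.ops) (x : Fin (σ.arity f) → A.carrier) :
    (A.quotAlg θ).interp f (fun i => Quot.mk θ (x i)) = Quot.mk θ (A.interp f x) :=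
  Quot.sound (hθ.2 f _ x fun _ => (mk_eq_mk_iff hθ).1 (Quot.out_eq _))

def quotComap (A : Alg σ) (θ : A.carrier → A.carrier → Prop) (γ : Quot θ → Quot θ → Prop) :
    A.carrier → A.carrier → Prop :=
  fun a b => γ (Quot.mk θ a) (Quot.mk θ b)

theorem quotComap_injective : Function.Injective (A.quotComap θ) := by
  intro γ γ' h
  funext p q
  induction p using Quot.ind
  induction q using Quot.ind
  exact congrFun₂ h _ _

theorem quotComap_conMeet :
    A.quotComap θ ((A.quotAlg θ).conMeet γ γ') = A.conMeet (A.quotComap θ γ) (A.quotComap θ γ') :=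
  rfl

theorem isCon_quotComap (hθ : A.IsCon θ) (hγ : (A.quotAlg θ).IsCon γ) :
    A.IsCon (A.quotComap θ γ) :=
  ⟨⟨fun _ => hγ.1.refl _, hγ.1.symm, hγ.1.trans⟩, fun f x y h => by
    simpa only [quotComap, quotAlg_interp_mk hθ] using hγ.2 f _ _ h⟩

theorem quotComap_delta (hθ : A.IsCon θ) : A.quotComap θ (A.quotAlg θ).delta = θ :=
  funext₂ fun _ _ => propext (mk_eq_mk_iff hθ)

theorem quotComap_eq_nabla_iff : A.quotComap θ γ = A.nabla ↔ γ = (A.quotAlg θ).nabla :=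
  ⟨fun h => quotComap_injective h, fun h => h ▸ rfl⟩

theorem quotComap_quotRel (hθ : A.IsCon θ) {α : A.carrier → A.carrier → Prop}
    (hα : A.IsCon α) (hθα : θ ≤ α) : A.quotComap θ (A.quotRel θ α) = α := by
  refine funext₂ fun a b => propext ⟨fun ⟨a', b', ha, hb, h⟩ => ?_, fun h => ⟨a, b, rfl, rfl, h⟩⟩
  rw [mk_eq_mk_iff hθ] at ha hb
  exact hα.1.trans (hα.1.trans (hθα _ _ ha) h) (hα.1.symm (hθα _ _ hb))

theorem isCon_quotRel (hθ : A.IsCon θ) {α : A.carrier → A.carrier → Prop}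
    (hα : A.IsCon α) (hθα : θ ≤ α) : (A.quotAlg θ).IsCon (A.quotRel θ α) := by
  have key : ∀ p q : Quot θ, A.quotRel θ α p q ↔ α p.out q.out := fun p q => by
    conv_lhs => rw [← Quot.out_eq p, ← Quot.out_eq q]
    exact iff_of_eq (congrFun₂ (quotComap_quotRel hθ hα hθα) _ _)
  refine ⟨⟨fun p => (key p p).2 (hα.1.refl _), fun h => (key _ _).2 (hα.1.symm ((key _ _).1 h)),
    fun h h' => (key _ _).2 (hα.1.trans ((key _ _).1 h) ((key _ _).1 h'))⟩, fun f x y h => ?_⟩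
  exact ⟨_, _, rfl, rfl, hα.2 f _ _ fun i => (key _ _).1 (h i)⟩

theorem quotRel_conJoin_delta (hθ : A.IsCon θ) :
    A.quotRel θ (A.conJoin A.delta θ) = (A.quotAlg θ).delta := by
  rw [conJoin_delta_left hθ]
  exact quotComap_injective (by rw [quotComap_quotRel hθ hθ le_rfl, quotComap_delta hθ])

theorem quotRel_conJoin_nabla (hθ : A.IsCon θ) :
    A.quotRel θ (A.conJoin A.nabla θ) = (A.quotAlg θ).nabla := by
  rw [conJoin_nabla_left, ← quotComap_eq_nabla_iff]
  exact quotComap_quotRel hθ (isCon_nabla A) fun _ _ _ => trivial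

/-- The hypothesis leaves every quotient `A/θ` with the factor congruences `Δ` and `∇` only,
the images of `Δ` and `∇`. -/
theorem algFCLP_of_comp_eq_nabla
    (h : ∀ α β, A.IsCon α → A.IsCon β → A.comp α β = A.nabla → α = A.nabla ∨ β = A.nabla) :
    A.AlgFCLP := by
  intro θ hθ γ ⟨hγ, γ', hγ', hjoin, hmeet, hcomm⟩
  have hcomp : ∀ p q, (A.quotAlg θ).comp γ γ' p q := fun p q =>
    conJoin_le_comp hγ hγ' hcomm p q (hjoin ▸ trivial)
  have hcomp' : A.comp (A.quotComap θ γ) (A.quotComap θ γ') = A.nabla := by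
    refine funext₂ fun a b => eq_true ?_
    obtain ⟨q, h₁, h₂⟩ := hcomp (Quot.mk θ a) (Quot.mk θ b)
    rw [← Quot.out_eq q] at h₁ h₂
    exact ⟨q.out, h₁, h₂⟩
  rcases h _ _ (isCon_quotComap hθ hγ) (isCon_quotComap hθ hγ') hcomp' with h | h
  · exact ⟨A.nabla, isFC_nabla A,
      (quotRel_conJoin_nabla hθ).trans (quotComap_eq_nabla_iff.1 h).symm⟩
  · refine ⟨A.delta, isFC_delta A, (quotRel_conJoin_delta hθ).trans ?_⟩
    rw [← hmeet, quotComap_eq_nabla_iff.1 h]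
    exact funext₂ fun _ _ => and_true _

/-- `B(Con A) = {Δ, ∇}`, whose images in `Con(A/θ)` are again `Δ` and `∇`. -/
theorem not_hasCBLP {m₁ m₂ : A.carrier} (hm : m₁ ≠ m₂)
    (hmono : ∀ r, A.IsCon r → r ≠ A.delta → r m₁ m₂) (hθ : A.IsCon θ)
    (hγ : (A.quotAlg θ).IsBooleanCon γ) (hγ_ne_delta : γ ≠ (A.quotAlg θ).delta)
    (hγ_ne_nabla : γ ≠ (A.quotAlg θ).nabla) : ¬ A.HasCBLP θ := by
  intro h
  obtain ⟨ψ, hψ, rfl⟩ := h γ hγ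
  rcases eq_delta_or_eq_nabla_of_isBooleanCon hm hmono hψ with rfl | rfl
  · exact hγ_ne_delta (quotRel_conJoin_delta hθ)
  · exact hγ_ne_nabla (quotRel_conJoin_nabla hθ)

end Quotient

section Lattice

variable {L : Type} [Lattice L] [BoundedOrder L] {r s t : L → L → Prop}

theorem IsCon.sup (hr : (latAlg L).IsCon r) {a b c d : L} (h₁ : r a b) (h₂ : r c d) :
    r (a ⊔ c) (b ⊔ d) :=
  hr.2 .sup ![a, c] ![b, d] (Fin.forall_fin_two.2 ⟨h₁, h₂⟩)

theorem IsCon.inf (hr : (latAlg L).IsCon r) {a b c d : L} (h₁ : r a b) (h₂ : r c d) :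
    r (a ⊓ c) (b ⊓ d) :=
  hr.2 .inf ![a, c] ![b, d] (Fin.forall_fin_two.2 ⟨h₁, h₂⟩)

theorem IsCon.sup_right (hr : (latAlg L).IsCon r) (c : L) {a b : L} (h : r a b) :
    r (a ⊔ c) (b ⊔ c) :=
  hr.sup h (hr.1.refl c)

theorem IsCon.inf_right (hr : (latAlg L).IsCon r) (c : L) {a b : L} (h : r a b) :
    r (a ⊓ c) (b ⊓ c) :=
  hr.inf h (hr.1.refl c)

theorem isCon_latAlg (hr : Equivalence r) (hsup : ∀ a b c, r a b → r (a ⊔ c) (b ⊔ c))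
    (hinf : ∀ a b c, r a b → r (a ⊓ c) (b ⊓ c)) : (latAlg L).IsCon r := by
  have hsup₂ {a b c d : L} (h₁ : r a b) (h₂ : r c d) : r (a ⊔ c) (b ⊔ d) :=
    hr.trans (hsup _ _ _ h₁) (by simpa only [sup_comm b] using hsup _ _ b h₂)
  have hinf₂ {a b c d : L} (h₁ : r a b) (h₂ : r c d) : r (a ⊓ c) (b ⊓ d) :=
    hr.trans (hinf _ _ _ h₁) (by simpa only [inf_comm b] using hinf _ _ b h₂)
  refine ⟨hr, fun f x y h => ?_⟩
  cases f
  exacts [hsup₂ (h 0) (h 1), hinf₂ (h 0) (h 1), hr.refl _, hr.refl _]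

theorem eq_nabla_of_rel_bot_top (hr : (latAlg L).IsCon r) (h : r ⊥ ⊤) :
    r = (latAlg L).nabla := by
  have htop : ∀ a, r a ⊤ := fun a => by simpa using hr.sup_right a h
  exact funext₂ fun a b => eq_true (hr.1.trans (htop a) (hr.1.symm (htop b)))

/-- Joining with `q` and `s` collapses both with `i`; meeting with `s` then collapses `o`
with `s`. -/
theorem IsCon.rel_top_of_rel_atom (hr : (latAlg L).IsCon r) {o p q s i : L} (hpq : p ⊔ q = i)
    (hps : p ⊔ s = i) (hqs : q ⊓ s = o) (h : r o p) : r o i := by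
  have hq : r q i := by
    simpa only [sup_eq_right.2 (hqs ▸ inf_le_left : o ≤ q), hpq] using hr.sup_right q h
  have hs : r s i := by
    simpa only [sup_eq_right.2 (hqs ▸ inf_le_right : o ≤ s), hps] using hr.sup_right s h
  have hos : r o s := by
    simpa only [hqs, inf_eq_right.2 (hps ▸ le_sup_right : s ≤ i)] using hr.inf_right s hq
  exact hr.1.trans hos hs

theorem isCon_transGen (hs : (latAlg L).IsCon s) (ht : (latAlg L).IsCon t) :
    (latAlg L).IsCon (Relation.TransGen fun a b => s a b ∨ t a b) := by
  refine isCon_latAlg ⟨fun a => .single (.inl (hs.1.refl a)), fun h => ?_, .trans⟩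
    (fun a b c h => h.lift (· ⊔ c) fun u v huv => huv.imp (hs.sup_right c) (ht.sup_right c))
    (fun a b c h => h.lift (· ⊓ c) fun u v huv => huv.imp (hs.inf_right c) (ht.inf_right c))
  exact (Relation.transGen_swap.2 h).lift id fun _ _ h => h.imp hs.1.symm ht.1.symm

theorem latAlg_conJoin_eq_transGen (hs : (latAlg L).IsCon s) (ht : (latAlg L).IsCon t) :
    (latAlg L).conJoin s t = Relation.TransGen fun a b => s a b ∨ t a b :=
  le_antisymm (conJoin_le (isCon_transGen hs ht) (fun _ _ h => .single (.inl h))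
    (fun _ _ h => .single (.inr h))) transGen_le_conJoin

/-- An `s`/`t`-chain from `a` to `b`, clamped into `[a ⊓ b, a ⊔ b]`, stays inside the
`r`-class of `a`. -/
theorem latAlg_congDistrib : (latAlg L).CongDistrib := by
  intro r s t hr hs ht
  refine le_antisymm (fun (a b : L) ⟨hab, hst⟩ => ?_)
    (conJoin_le (hr.conMeet (isCon_conJoin _ s t)) (fun a b h => ⟨h.1, le_conJoin_left a b h.2⟩)
      (fun a b h => ⟨h.1, le_conJoin_right a b h.2⟩))
  rw [latAlg_conJoin_eq_transGen hs ht] at hst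
  rw [latAlg_conJoin_eq_transGen (hr.conMeet hs) (hr.conMeet ht)]
  let f : L → L := fun u => (u ⊔ a ⊓ b) ⊓ (a ⊔ b)
  have hf : ∀ u, r (f u) a := fun u => by
    simpa using hr.inf (hr.sup (hr.1.refl u) (hr.inf (hr.1.refl a) (hr.1.symm hab)))
      (hr.sup (hr.1.refl a) (hr.1.symm hab))
  have hfa : f a = a := by simp [f]
  have hfb : f b = b := by simp [f]
  rw [← hfa, ← hfb]
  exact hst.lift f fun u v huv => huv.imp
    (fun h => ⟨hr.1.trans (hf u) (hr.1.symm (hf v)), hs.inf_right _ (hs.sup_right _ h)⟩)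
    (fun h => ⟨hr.1.trans (hf u) (hr.1.symm (hf v)), ht.inf_right _ (ht.sup_right _ h)⟩)

end Lattice

end Alg

inductive H : Type
  | bot | a | b | c | x | y | z | top
  deriving DecidableEq

namespace H

open Alg

instance : Fintype H :=
  ⟨{bot, a, b, c, x, y, z, top}, fun p => by cases p <;> decide⟩

def le : H → H → Bool
  | bot, _ | _, top => true
  | a, y | a, z | b, y | b, z | c, y | c, z | c, x | y, z => true
  | p, q => p == q

instance : LE H := ⟨fun p q => le p q⟩

instance : DecidableLE H := fun p q => inferInstanceAs (Decidable (le p q = true))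

instance : Lattice H where
  le_refl := by decide
  le_trans := by decide
  le_antisymm := by decide
  sup p q := if p ≤ q then q else if q ≤ p then p else if p ≤ y ∧ q ≤ y then y else top
  le_sup_left := by decide
  le_sup_right := by decide
  sup_le := by decide
  inf p q := if p ≤ q then p else if q ≤ p then q else if c ≤ p ∧ c ≤ q then c else bot
  inf_le_left := by decide
  inf_le_right := by decide
  le_inf := by decide

instance : BoundedOrder H where
  top := top
  le_top := by decide
  bot := bot
  bot_le := by decide

theorem card_eq : Nat.card H = 8 := by
  rw [Nat.card_eq_fintype_card]; rfl

theorem not_isModularLattice : ¬ IsModularLattice H := fun h =>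
  absurd (h.sup_inf_le_assoc_of_le (x := y) x (z := z) (by decide)) (by decide)

/- These are `Cg(z, ⊤)`, `Cg(⊥, y)` and `Cg(y, z)`; with `Δ` and `∇` they exhaust `Con H`. -/
abbrev θ₂ : H → H → Prop := fun u v => u ⊓ y = v ⊓ y

abbrev θ₃ : H → H → Prop := fun u v => u ⊔ z = v ⊔ z

abbrev θ₁ : H → H → Prop := fun u v => θ₂ u v ∧ θ₃ u v

theorem isCon_θ₂ : (latAlg H).IsCon θ₂ :=
  isCon_latAlg ⟨fun _ => rfl, Eq.symm, Eq.trans⟩ (by decide) (by decide)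

theorem isCon_θ₃ : (latAlg H).IsCon θ₃ :=
  isCon_latAlg ⟨fun _ => rfl, Eq.symm, Eq.trans⟩ (by decide) (by decide)

theorem isCon_θ₁ : (latAlg H).IsCon θ₁ :=
  isCon_θ₂.conMeet isCon_θ₃

variable {r : H → H → Prop} {u v : H}

theorem rel_bot_y_of_rel_bot_atom (hr : (latAlg H).IsCon r) {p : H}
    (hp : p = a ∨ p = b ∨ p = c) (h : r ⊥ p) : r ⊥ y := by
  rcases hp with rfl | rfl | rfl
  · exact hr.rel_top_of_rel_atom (q := b) (s := c) rfl rfl rfl h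
  · exact hr.rel_top_of_rel_atom (q := a) (s := c) rfl rfl rfl h
  · exact hr.rel_top_of_rel_atom (q := a) (s := b) rfl rfl rfl h

theorem rel_bot_y_of_not_θ₂ (hr : (latAlg H).IsCon r) (h : r u v) (huv : ¬ θ₂ u v) :
    r ⊥ y := by
  -- `· ⊓ y` maps `u, v` to distinct points of the diamond `[⊥, y]`, and some atom lies below
  -- exactly one of them
  obtain ⟨p, hp, hpuv⟩ := (by decide : ∀ u v : H, ¬ θ₂ u v → ∃ p, (p = a ∨ p = b ∨ p = c) ∧
    ((u ⊓ p = ⊥ ∧ v ⊓ p = p) ∨ (u ⊓ p = p ∧ v ⊓ p = ⊥))) u v huv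
  refine rel_bot_y_of_rel_bot_atom hr hp ?_
  have := hr.inf_right p h
  rcases hpuv with ⟨hu, hv⟩ | ⟨hu, hv⟩
  · rwa [hu, hv] at this
  · rw [hu, hv] at this; exact hr.1.symm this

theorem rel_z_top_of_not_θ₃ (hr : (latAlg H).IsCon r) (h : r u v) (huv : ¬ θ₃ u v) :
    r z ⊤ := by
  have := hr.sup_right z h
  rcases (by decide : ∀ u v : H, ¬ θ₃ u v →
    (u ⊔ z = z ∧ v ⊔ z = ⊤) ∨ (u ⊔ z = ⊤ ∧ v ⊔ z = z)) u v huv with ⟨hu, hv⟩ | ⟨hu, hv⟩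
  · rwa [hu, hv] at this
  · rw [hu, hv] at this; exact hr.1.symm this

-- `t ↦ (t ⊔ x) ⊓ z ⊔ y` maps `⊥, y` to `y, z`.
theorem rel_y_z_of_rel_bot_y (hr : (latAlg H).IsCon r) (h : r ⊥ y) : r y z :=
  hr.sup_right y (hr.inf_right z (hr.sup_right x h))

-- `t ↦ t ⊓ x ⊔ y` maps `z, ⊤` to `y, ⊤`.
theorem rel_y_z_of_rel_z_top (hr : (latAlg H).IsCon r) (h : r z ⊤) : r y z :=
  hr.1.trans (hr.sup_right y (hr.inf_right x h)) (hr.1.symm h)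

theorem rel_y_z_of_ne_delta (hr : (latAlg H).IsCon r) (hne : r ≠ (latAlg H).delta) : r y z := by
  obtain ⟨u, v, h, huv⟩ := exists_rel_ne_of_ne_delta hr hne
  by_cases h₃ : θ₃ u v
  · by_cases h₂ : θ₂ u v
    · rcases (by decide : ∀ u v : H, θ₂ u v → θ₃ u v → u ≠ v →
        (u = y ∧ v = z) ∨ (u = z ∧ v = y)) u v h₂ h₃ huv with ⟨rfl, rfl⟩ | ⟨rfl, rfl⟩
      exacts [h, hr.1.symm h]
    · exact rel_y_z_of_rel_bot_y hr (rel_bot_y_of_not_θ₂ hr h h₂)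
  · exact rel_y_z_of_rel_z_top hr (rel_z_top_of_not_θ₃ hr h h₃)

-- `⊥ ∼ c ∼ x ∼ ⊤`, via `· ⊓ c`, `· ⊓ x` and `· ⊔ x`.
theorem eq_nabla_of_rel_bot_y_of_rel_z_top (hr : (latAlg H).IsCon r) (h₁ : r ⊥ y)
    (h₂ : r z ⊤) : r = (latAlg H).nabla :=
  eq_nabla_of_rel_bot_top hr <|
    hr.1.trans (hr.inf_right c h₁) (hr.1.trans (hr.inf_right x h₂) (hr.sup_right x h₁))

theorem le_θ₂_or_le_θ₃ (hr : (latAlg H).IsCon r) (hne : r ≠ (latAlg H).nabla) :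
    r ≤ θ₂ ∨ r ≤ θ₃ := by
  refine or_iff_not_imp_left.2 fun h₂ u v huv => ?_
  by_contra h₃
  obtain ⟨p, q, hpq, hn⟩ : ∃ p q, r p q ∧ ¬ θ₂ p q := by
    by_contra! h
    exact h₂ h
  exact hne (eq_nabla_of_rel_bot_y_of_rel_z_top hr (rel_bot_y_of_not_θ₂ hr hpq hn)
    (rel_z_top_of_not_θ₃ hr huv h₃))

theorem eq_nabla_of_comp_eq_nabla {α β : H → H → Prop} (hα : (latAlg H).IsCon α)
    (hβ : (latAlg H).IsCon β) (h : (latAlg H).comp α β = (latAlg H).nabla) :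
    α = (latAlg H).nabla ∨ β = (latAlg H).nabla := by
  by_contra! hne
  have h₁ : (latAlg H).comp α β (⊥ : H) x := h ▸ trivial
  have h₂ : (latAlg H).comp α β x (⊥ : H) := h ▸ trivial
  obtain ⟨u, hu₁, hu₂⟩ : ∃ u : H, β ⊥ u ∧ α u x := h₁
  obtain ⟨v, hv₁, hv₂⟩ : ∃ v : H, β x v ∧ α v ⊥ := h₂
  -- no composite of two of `θ₂`, `θ₃` contains both `(⊥, x)` and `(x, ⊥)`
  rcases le_θ₂_or_le_θ₃ hα hne.1 with hα' | hα' <;>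
    rcases le_θ₂_or_le_θ₃ hβ hne.2 with hβ' | hβ' <;>
    · replace hu₁ := hβ' _ _ hu₁; replace hu₂ := hα' _ _ hu₂
      replace hv₁ := hβ' _ _ hv₁; replace hv₂ := hα' _ _ hv₂
      revert u v
      decide

theorem algFCLP : (latAlg H).AlgFCLP :=
  algFCLP_of_comp_eq_nabla fun _ _ => eq_nabla_of_comp_eq_nabla

theorem isBooleanCon_quotRel_θ₂ :
    ((latAlg H).quotAlg θ₁).IsBooleanCon ((latAlg H).quotRel θ₁ θ₂) := by
  have h₂ := quotComap_quotRel isCon_θ₁ isCon_θ₂ fun _ _ h => h.1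
  have h₃ := quotComap_quotRel isCon_θ₁ isCon_θ₃ fun _ _ h => h.2
  refine ⟨isCon_quotRel isCon_θ₁ isCon_θ₂ fun _ _ h => h.1, (latAlg H).quotRel θ₁ θ₃,
    isCon_quotRel isCon_θ₁ isCon_θ₃ fun _ _ h => h.2, ?_, ?_⟩
  · refine le_antisymm (fun _ _ _ => trivial) fun p q _ t ht hs₂ hs₃ => ?_
    have := eq_nabla_of_rel_bot_y_of_rel_z_top (isCon_quotComap isCon_θ₁ ht)
      (hs₃ _ _ ⟨(⊥ : H), y, rfl, rfl, rfl⟩) (hs₂ _ _ ⟨z, (⊤ : H), rfl, rfl, rfl⟩)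
    rw [quotComap_eq_nabla_iff.1 this]
    trivial
  · apply quotComap_injective (A := latAlg H) (θ := θ₁)
    rw [quotComap_delta isCon_θ₁]
    exact quotComap_conMeet.trans (congrArg₂ (latAlg H).conMeet h₂ h₃)

theorem not_algCBLP : ¬ (latAlg H).AlgCBLP := by
  have h₂ := quotComap_quotRel isCon_θ₁ isCon_θ₂ fun _ _ h => h.1
  refine fun h => not_hasCBLP (by decide : (y : H) ≠ z) (fun _ => rel_y_z_of_ne_delta) isCon_θ₁
    isBooleanCon_quotRel_θ₂ (fun hdelta => ?_) (fun hnabla => ?_) (h θ₁ isCon_θ₁)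
  · rw [hdelta, quotComap_delta isCon_θ₁] at h₂
    exact absurd ((congrFun₂ h₂ c x).mpr (by decide)) (by decide)
  · rw [hnabla] at h₂
    exact absurd ((congrFun₂ h₂ (⊥ : H) a).mp trivial) (by decide)

end H

/-- FCLP does not imply CBLP: there is an eight-element non-modular bounded
lattice with FCLP and without CBLP; in particular, there is a
congruence-distributive algebra with FCLP and without CBLP. -/
theorem stmt_19 :
    (∃ (L : Type) (instL : Lattice L)
        (instB : @BoundedOrder L
          instL.toSemilatticeSup.toPartialOrder.toPreorder.toLE),
      Finite L ∧ Nat.card L = 8 ∧ ¬ @IsModularLattice L instL ∧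
      (@latAlg L instL instB).AlgFCLP ∧ ¬ (@latAlg L instL instB).AlgCBLP) ∧
    ∃ (σ : Signature) (A : Alg σ), Nonempty A.carrier ∧ A.CongDistrib ∧
      A.AlgFCLP ∧ ¬ A.AlgCBLP := by
  refine ⟨⟨H, inferInstance, inferInstance, inferInstance, H.card_eq, H.not_isModularLattice,
    H.algFCLP, H.not_algCBLP⟩, latSig, latAlg H, ⟨(⊥ : H)⟩, Alg.latAlg_congDistrib, H.algFCLP,
    H.not_algCBLP⟩
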